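/- arXiv:2305.08471 — 6 statements merged into one kernel-verified Lean document; each statement's English description precedes it below -/
import Mathlib

section
/- For every binary tree T with n internal nodes labeled 1,...,n in infix order, the sum over i of ℓ(T,i)·r(T,i) equals n(n+1)/2, where ℓ(T,i) and r(T,i) denote the numbers of leaves in the left and right subtrees of node i. -/
inductive BinTree : Type
  | leaf : BinTree
  | node : BinTree → BinTree → BinTree
  deriving DecidableEq

namespace BinTree

/-- number of internal nodes -/
def size : BinTree → ℕ
  | leaf => 0
  | node l r => size l + size r + 1

/-- number of leaves -/
def leaves : BinTree → ℕ
  | leaf => 1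
  | node l r => leaves l + leaves r

/-- the list, in infix order of the internal nodes, of the pairs
`(ℓ(T,i), r(T,i))` of numbers of leaves of the left and right subtrees. -/
def lodayList : BinTree → List (ℕ × ℕ)
  | leaf => []
  | node l r => lodayList l ++ (leaves l, leaves r) :: lodayList r

theorem leaves_eq (T : BinTree) : T.leaves = T.size + 1 := by
  induction T with
  | leaf => rfl
  | node l r hl hr => simp [leaves, size, hl, hr]; ring

theorem key (T : BinTree) :
    2 * ((T.lodayList.map fun p => p.1 * p.2).sum) = T.size * (T.size + 1) := by
  induction T with
  | leaf => rfl
  | node l r hl hr =>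
    simp only [lodayList, size, List.map_append, List.map_cons, List.sum_append,
      List.sum_cons, leaves_eq] at *
    nlinarith [hl, hr]

end BinTree

/-- For every binary tree `T` with `n` internal nodes, the sum over the internal
nodes `i` (in infix order) of `ℓ(T,i) · r(T,i)` equals `n(n+1)/2`. -/
theorem loday_coordinates_sum (n : ℕ) (T : BinTree) (hT : T.size = n) :
    ((T.lodayList.map fun p => p.1 * p.2).sum) = n * (n + 1) / 2 := by
  subst hT
  have := T.key
  omega
end

section
/- The binary tree map bt : S_n → T_n (insertion into a binary search tree from right to left) is surjective, and its fiber over a tree T is exactly the set of linear extensions of T, i.e., permutations σ such that whenever i is a descendant of j in T, i appears before j in σ. -/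
open Equiv

/-- Binary trees with internal nodes labeled by natural numbers. -/
inductive LTree : Type
  | leaf : LTree
  | node : LTree → ℕ → LTree → LTree
  deriving DecidableEq

namespace LTree

/-- Binary search tree insertion. -/
def insert (x : ℕ) : LTree → LTree
  | leaf => node leaf x leaf
  | node l v r => if x < v then node (insert x l) v r else node l v (insert x r)

/-- Binary search tree built from a word by inserting its letters from right to left. -/
def ofWord (w : List ℕ) : LTree := w.foldr insert leaf

/-- Infix (in-order) list of labels. -/
def labels : LTree → List ℕ
  | leaf => []
  | node l v r => labels l ++ v :: labels r

/-- `x` occurs as a label in the tree. -/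
def mem (x : ℕ) : LTree → Prop
  | leaf => False
  | node l v r => x = v ∨ mem x l ∨ mem x r

/-- `desc T i j` : the node labeled `i` is a proper descendant of the node labeled `j`. -/
def desc : LTree → ℕ → ℕ → Prop
  | leaf, _, _ => False
  | node l v r, i, j => (j = v ∧ i ≠ v ∧ (mem i l ∨ mem i r)) ∨ desc l i j ∨ desc r i j

end LTree

/-- The one-line notation of a permutation of `Fin n`, as a word on `ℕ`. -/
def word {n : ℕ} (σ : Perm (Fin n)) : List ℕ := List.ofFn fun i => (σ i : ℕ)

/-- The binary tree map `bt` (binary search tree insertion of `σ_n, …, σ_1`). -/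
def bt {n : ℕ} (σ : Perm (Fin n)) : LTree := LTree.ofWord (word σ)

namespace LTree

lemma mem_iff : ∀ (t : LTree) (x : ℕ), mem x t ↔ x ∈ labels t
  | leaf, x => by simp [mem, labels]
  | node l v r, x => by
      simp [mem, labels, mem_iff l, mem_iff r]
      tauto

lemma desc_spec : ∀ (t : LTree) (i j : ℕ), desc t i j →
    i ∈ labels t ∧ j ∈ labels t ∧ i ≠ j
  | leaf, i, j, h => h.elim
  | node l v r, i, j, h => by
      rcases h with ⟨rfl, hne, hm⟩ | h | h
      · refine ⟨?_, by simp [labels], hne⟩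
        rcases hm with hm | hm
        · simp [labels, (mem_iff l i).mp hm]
        · simp [labels, (mem_iff r i).mp hm]
      · obtain ⟨h1, h2, h3⟩ := desc_spec l i j h
        exact ⟨by simp [labels, h1], by simp [labels, h2], h3⟩
      · obtain ⟨h1, h2, h3⟩ := desc_spec r i j h
        exact ⟨by simp [labels, h1], by simp [labels, h2], h3⟩

lemma labels_insert (x : ℕ) : ∀ t : LTree, (labels (insert x t)).Perm (x :: labels t)
  | leaf => by simp [insert, labels]
  | node l v r => by
      by_cases h : x < v
      · simp only [insert, if_pos h, labels]
        exact (labels_insert x l).append_right _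
      · simp only [insert, if_neg h, labels]
        refine List.Perm.trans (List.Perm.append_left _ ((labels_insert x r).cons v)) ?_
        have h1 : labels l ++ v :: x :: labels r = (labels l ++ [v]) ++ x :: labels r := by
          simp
        rw [h1]
        refine List.Perm.trans List.perm_middle (List.Perm.of_eq ?_)
        simp

lemma labels_foldr : ∀ (w : List ℕ) (t : LTree),
    (labels (w.foldr insert t)).Perm (w ++ labels t)
  | [], t => List.Perm.refl _
  | a :: w, t => by
      simpa using (labels_insert a (w.foldr insert t)).trans
        ((labels_foldr w t).cons a)

lemma foldr_node : ∀ (u : List ℕ) (l : LTree) (v : ℕ) (r : LTree),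
    u.foldr insert (node l v r) =
      node ((u.filter (fun x => decide (x < v))).foldr insert l) v
        ((u.filter (fun x => decide (¬ x < v))).foldr insert r)
  | [], l, v, r => rfl
  | a :: u, l, v, r => by
      simp only [List.foldr_cons, foldr_node u l v r, List.filter_cons]
      by_cases h : a < v
      · simp [insert, h]
      · simp [insert, h, Nat.le_of_not_lt h]

/-- The main characterization, at the level of words. -/
lemma main : ∀ (T : LTree) (w : List ℕ), (labels T).Pairwise (· < ·) →
    w.Perm (labels T) →
    (ofWord w = T ↔ ∀ i j : ℕ, desc T i j → [i, j].Sublist w)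
  | leaf, w, _, hperm => by
      have : w = [] := List.Perm.eq_nil (by simpa [labels] using hperm)
      subst this
      constructor
      · intro _ i j h
        exact h.elim
      · intro _
        rfl
  | node l v r, w, hsort, hperm => by
      -- unpack sortedness
      have hsort' := hsort
      rw [labels] at hsort'
      obtain ⟨hsl, hsvr, hcross⟩ := List.pairwise_append.mp hsort'
      obtain ⟨hvr, hsr⟩ := List.pairwise_cons.mp hsvr
      have hlv : ∀ x ∈ labels l, x < v := fun x hx => hcross x hx v (by simp)
      -- nodup
      have hndT : (labels (node l v r)).Nodup := hsort.nodup
      have hnd : w.Nodup := hperm.nodup_iff.mpr hndT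
      -- w is nonempty, write it as w' ++ [a]
      rcases List.eq_nil_or_concat w with rfl | ⟨w', a, hwa⟩
      · exfalso
        have : v ∈ ([] : List ℕ) := hperm.symm.subset (by simp [labels])
        simp at this
      rw [List.concat_eq_append] at hwa
      subst hwa
      have hanotw' : a ∉ w' := by
        have h' := hnd
        rw [List.nodup_append] at h'
        intro ha
        exact h'.2.2 a ha a (by simp) rfl
      -- key fact once a = v : w' is a permutation of labels l ++ labels r
      have key : a = v → (w'.Perm (labels l ++ labels r)) := by
        rintro rfl
        have h1 : (a :: w').Perm (a :: (labels l ++ labels r)) :=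
          (List.perm_append_singleton a w').symm.trans
            (hperm.trans (by
              show (labels l ++ a :: labels r).Perm _
              exact List.perm_middle))
        exact h1.cons_inv
      constructor
      · -- forward direction
        intro h
        have hw : ofWord (w' ++ [a]) =
            node ((w'.filter (fun x => decide (x < a))).foldr insert leaf) a
              ((w'.filter (fun x => decide (¬ x < a))).foldr insert leaf) := by
          rw [ofWord, List.foldr_append]
          exact foldr_node w' leaf a leaf
        rw [h] at hw
        injection hw with h1 h2 h3
        subst h2
        have hw' := key rfl
        have hfl : (w'.filter (fun x => decide (x < v))).Perm (labels l) := by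
          refine (hw'.filter _).trans ?_
          rw [List.filter_append, List.filter_eq_self.mpr (by
            intro x hx; simpa using hlv x hx),
            List.filter_eq_nil_iff.mpr (by
              intro x hx; simp; exact le_of_lt (hvr x hx))]
          simp
        have hfr : (w'.filter (fun x => decide (¬ x < v))).Perm (labels r) := by
          refine (hw'.filter _).trans ?_
          rw [List.filter_append, List.filter_eq_nil_iff.mpr (by
            intro x hx; simpa using hlv x hx),
            List.filter_eq_self.mpr (by
              intro x hx; simp; exact le_of_lt (hvr x hx))]
          simp
        have hl : ofWord (w'.filter (fun x => decide (x < v))) = l := h1.symm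
        have hr : ofWord (w'.filter (fun x => decide (¬ x < v))) = r := h3.symm
        intro i j hd
        rcases hd with ⟨rfl, hne, hm⟩ | hd | hd
        · -- j = v : i occurs in w'
          have hi : i ∈ w' := by
            apply hw'.symm.subset
            rcases hm with hm | hm
            · simp [(mem_iff l i).mp hm]
            · simp [(mem_iff r i).mp hm]
          exact List.Sublist.append (List.singleton_sublist.mpr hi)
            (List.Sublist.refl _)
        · have := ((main l _ hsl hfl).mp hl) i j hd
          exact (this.trans List.filter_sublist).trans
            (List.sublist_append_left _ _)
        · have := ((main r _ hsr hfr).mp hr) i j hd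
          exact (this.trans List.filter_sublist).trans
            (List.sublist_append_left _ _)
      · -- backward direction
        intro h
        -- first, a = v
        have hav : a = v := by
          by_contra hav
          have haT : a ∈ labels (node l v r) := hperm.subset (by simp)
          have hmem : mem a l ∨ mem a r := by
            rw [labels] at haT
            simp at haT
            rcases haT with h1 | h1 | h1
            · exact Or.inl ((mem_iff l a).mpr h1)
            · exact absurd h1 hav
            · exact Or.inr ((mem_iff r a).mpr h1)
          have hsub : [a, v].Sublist (w' ++ [a]) :=
            h a v (Or.inl ⟨rfl, hav, hmem⟩)
          rcases List.sublist_append_iff.mp hsub with ⟨s1, s2, heq, hs1, hs2⟩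
          have hs2' : s2 = [] ∨ s2 = [a] := by
            cases hs2 with
            | cons _ h' => left; exact List.sublist_nil.mp h'
            | cons_cons _ h' => right; rw [List.sublist_nil.mp h']
          rcases hs2' with rfl | rfl
          · rw [List.append_nil] at heq
            subst heq
            have : a ∈ w' := hs1.subset (by simp)
            exact hanotw' this
          · -- s1 ++ [a] = [a, v] forces a = v
            cases s1 with
            | nil => simp at heq
            | cons x s1' =>
              cases s1' with
              | nil =>
                simp at heq
                exact hav heq.2.symm
              | cons y s1'' =>
                simp at heq
        subst hav
        have hw' := key rfl
        have hfl : (w'.filter (fun x => decide (x < a))).Perm (labels l) := by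
          refine (hw'.filter _).trans ?_
          rw [List.filter_append, List.filter_eq_self.mpr (by
            intro x hx; simpa using hlv x hx),
            List.filter_eq_nil_iff.mpr (by
              intro x hx; simp; exact le_of_lt (hvr x hx))]
          simp
        have hfr : (w'.filter (fun x => decide (¬ x < a))).Perm (labels r) := by
          refine (hw'.filter _).trans ?_
          rw [List.filter_append, List.filter_eq_nil_iff.mpr (by
            intro x hx; simpa using hlv x hx),
            List.filter_eq_self.mpr (by
              intro x hx; simp; exact le_of_lt (hvr x hx))]
          simp
        -- sublist conditions for subtrees
        have sub_w' : ∀ i j : ℕ, i ≠ a → j ≠ a → [i, j].Sublist (w' ++ [a]) →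
            [i, j].Sublist w' := by
          intro i j hia hja hsub
          rcases List.sublist_append_iff.mp hsub with ⟨s1, s2, heq, hs1, hs2⟩
          have hs2' : s2 = [] ∨ s2 = [a] := by
            cases hs2 with
            | cons _ h' => left; exact List.sublist_nil.mp h'
            | cons_cons _ h' => right; rw [List.sublist_nil.mp h']
          rcases hs2' with rfl | rfl
          · rw [List.append_nil] at heq; subst heq; exact hs1
          · exfalso
            have : a ∈ [i, j] := by rw [heq]; simp
            simp at this
            rcases this with h' | h'
            · exact hia h'.symm
            · exact hja h'.symm
        have hl : ofWord (w'.filter (fun x => decide (x < a))) = l := by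
          rw [main l _ hsl hfl]
          intro i j hd
          obtain ⟨hi, hj, _⟩ := desc_spec l i j hd
          have hiv : i < a := hlv i hi
          have hjv : j < a := hlv j hj
          have h1 : [i, j].Sublist (w' ++ [a]) := h i j (Or.inr (Or.inl hd))
          have h2 : [i, j].Sublist w' :=
            sub_w' i j (by omega) (by omega) h1
          have h3 := h2.filter (fun x => decide (x < a))
          simpa [List.filter_cons, hiv, hjv] using h3
        have hr : ofWord (w'.filter (fun x => decide (¬ x < a))) = r := by
          rw [main r _ hsr hfr]
          intro i j hd
          obtain ⟨hi, hj, _⟩ := desc_spec r i j hd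
          have hiv : a < i := hvr i hi
          have hjv : a < j := hvr j hj
          have h1 : [i, j].Sublist (w' ++ [a]) := h i j (Or.inr (Or.inr hd))
          have h2 : [i, j].Sublist w' :=
            sub_w' i j (by omega) (by omega) h1
          have h3 := h2.filter (fun x => decide (¬ x < a))
          simpa [List.filter_cons, le_of_lt hiv, le_of_lt hjv] using h3
        rw [ofWord, List.foldr_append]
        show w'.foldr insert (node leaf a leaf) = node l a r
        rw [foldr_node]
        rw [show (w'.filter (fun x => decide (x < a))).foldr insert leaf = l from hl,
          show (w'.filter (fun x => decide (¬ x < a))).foldr insert leaf = r from hr]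

/-- Postorder word. -/
def post : LTree → List ℕ
  | leaf => []
  | node l v r => post l ++ post r ++ [v]

lemma post_perm : ∀ t : LTree, (post t).Perm (labels t)
  | leaf => List.Perm.refl _
  | node l v r => by
      have h1 : ((post l ++ post r) ++ [v]).Perm ((labels l ++ labels r) ++ [v]) :=
        ((post_perm l).append (post_perm r)).append_right _
      have h2 : ((labels l ++ labels r) ++ [v]).Perm (v :: (labels l ++ labels r)) :=
        List.perm_append_singleton _ _
      have h3 : (labels l ++ v :: labels r).Perm (v :: (labels l ++ labels r)) :=
        List.perm_middle
      exact (h1.trans h2).trans h3.symm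

lemma ofWord_post : ∀ t : LTree, (labels t).Pairwise (· < ·) → ofWord (post t) = t
  | leaf, _ => rfl
  | node l v r, hsort => by
      have hsort' := hsort
      rw [labels] at hsort'
      obtain ⟨hsl, hsvr, hcross⟩ := List.pairwise_append.mp hsort'
      obtain ⟨hvr, hsr⟩ := List.pairwise_cons.mp hsvr
      have hlv : ∀ x ∈ labels l, x < v := fun x hx => hcross x hx v (by simp)
      rw [main (node l v r) _ hsort (post_perm (node l v r))]
      intro i j hd
      rcases hd with ⟨rfl, hne, hm⟩ | hd | hd
      · have hi : i ∈ post l ++ post r := by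
          rcases hm with hm | hm
          · exact List.mem_append_left _ ((post_perm l).symm.subset
              ((mem_iff l i).mp hm))
          · exact List.mem_append_right _ ((post_perm r).symm.subset
              ((mem_iff r i).mp hm))
        exact List.Sublist.append (List.singleton_sublist.mpr hi)
          (List.Sublist.refl _)
      · have h1 : [i, j].Sublist (post l) := by
          have := (main l (post l) hsl (post_perm l)).mp (ofWord_post l hsl)
          exact this i j hd
        exact (h1.trans (List.sublist_append_left _ _)).trans
          (List.sublist_append_left _ _)
      · have h1 : [i, j].Sublist (post r) := by
          have := (main r (post r) hsr (post_perm r)).mp (ofWord_post r hsr)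
          exact this i j hd
        exact ((h1.trans (List.sublist_append_right _ _)).trans
          (List.sublist_append_left _ _))

end LTree

lemma sublist_indexOf {w : List ℕ} (hnd : w.Nodup) {x y : ℕ}
    (h : [x, y].Sublist w) : w.idxOf x < w.idxOf y := by
  induction w with
  | nil => simp at h
  | cons a w ih =>
    have hanw : a ∉ w := (List.nodup_cons.mp hnd).1
    cases h with
    | cons _ h' =>
      have hx : x ∈ w := h'.subset (by simp)
      have hy : y ∈ w := h'.subset (by simp)
      have hax : a ≠ x := fun he => hanw (he ▸ hx)
      have hay : a ≠ y := fun he => hanw (he ▸ hy)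
      rw [List.idxOf_cons_ne _ hax, List.idxOf_cons_ne _ hay]
      exact Nat.succ_lt_succ (ih (List.nodup_cons.mp hnd).2 h')
    | cons_cons _ h' =>
      have hy : y ∈ w := h'.subset (by simp)
      have hxy : x ≠ y := fun he => hanw (he ▸ hy)
      rw [List.idxOf_cons_self, List.idxOf_cons_ne _ hxy]
      exact Nat.succ_pos _

/-- The binary tree map `bt : S_n → T_n` is surjective onto binary search trees
with label set `{0, …, n-1}`, and its fiber over such a tree `T` is exactly the set
of linear extensions of `T`: the permutations `σ` such that whenever `i` is a
descendant of `j` in `T`, the value `i` appears before the value `j` in `σ`. -/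
theorem bt_surjective_and_fibers (n : ℕ) (T : LTree)
    (hT : T.labels = List.range n) :
    (∃ σ : Perm (Fin n), bt σ = T) ∧
    (∀ σ : Perm (Fin n),
      bt σ = T ↔ ∀ i j : Fin n, T.desc i j → σ⁻¹ i < σ⁻¹ j) := by
  have hsorted : T.labels.Pairwise (· < ·) := by
    rw [hT]; exact List.pairwise_lt_range
  have hwlen : ∀ σ : Perm (Fin n), (word σ).length = n := by
    intro σ; simp [word]
  -- word σ facts
  have hword_nodup : ∀ σ : Perm (Fin n), (word σ).Nodup := by
    intro σ
    rw [word, List.nodup_ofFn]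
    exact fun i j hij => σ.injective (Fin.val_injective hij)
  have hword_perm : ∀ σ : Perm (Fin n), (word σ).Perm T.labels := by
    intro σ
    rw [hT]
    rw [List.perm_ext_iff_of_nodup (hword_nodup σ) (List.nodup_range)]
    intro x
    simp only [word, List.mem_ofFn, List.mem_range]
    constructor
    · rintro ⟨i, rfl⟩; exact (σ i).isLt
    · intro hx; exact ⟨σ⁻¹ ⟨x, hx⟩, by simp⟩
  have hword_get : ∀ (σ : Perm (Fin n)) (i : Fin n),
      (word σ)[((σ⁻¹ i : Fin n) : ℕ)]'(by rw [hwlen]; exact (σ⁻¹ i).isLt) = (i : ℕ) := by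
    intro σ i
    simp [word, List.getElem_ofFn]
  -- sublist ↔ inverse order
  have hconv : ∀ (σ : Perm (Fin n)) (i j : Fin n), i ≠ j →
      ([(i : ℕ), (j : ℕ)].Sublist (word σ) ↔ σ⁻¹ i < σ⁻¹ j) := by
    intro σ i j hij
    constructor
    · intro h
      have h1 := sublist_indexOf (hword_nodup σ) h
      have h2 : (word σ).idxOf (i : ℕ) = σ⁻¹ i := by
        have h3 := List.get_idxOf (hword_nodup σ)
          (Fin.cast (hwlen σ).symm (σ⁻¹ i))
        rw [show (word σ).get (Fin.cast (hwlen σ).symm (σ⁻¹ i)) = (i : ℕ) from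
          hword_get σ i] at h3
        rw [h3]; rfl
      have h4 : (word σ).idxOf (j : ℕ) = σ⁻¹ j := by
        have h3 := List.get_idxOf (hword_nodup σ)
          (Fin.cast (hwlen σ).symm (σ⁻¹ j))
        rw [show (word σ).get (Fin.cast (hwlen σ).symm (σ⁻¹ j)) = (j : ℕ) from
          hword_get σ j] at h3
        rw [h3]; rfl
      rw [h2, h4] at h1
      exact h1
    · intro h
      have h5 := List.map_getElem_sublist (l := word σ)
        (is := [Fin.cast (hwlen σ).symm (σ⁻¹ i), Fin.cast (hwlen σ).symm (σ⁻¹ j)])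
        (by simp [List.pairwise_cons]; exact h)
      have e1 := hword_get σ i
      have e2 := hword_get σ j
      simp only [Perm.inv_def] at e1 e2
      simpa [e1, e2] using h5
  -- the characterization for each σ
  have hmain : ∀ σ : Perm (Fin n),
      bt σ = T ↔ ∀ i j : ℕ, T.desc i j → [i, j].Sublist (word σ) :=
    fun σ => LTree.main T (word σ) hsorted (hword_perm σ)
  have hfiber : ∀ σ : Perm (Fin n),
      bt σ = T ↔ ∀ i j : Fin n, T.desc i j → σ⁻¹ i < σ⁻¹ j := by
    intro σ
    rw [hmain σ]
    constructor
    · intro h i j hd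
      have hij : (i : ℕ) ≠ (j : ℕ) := (LTree.desc_spec T i j hd).2.2
      exact (hconv σ i j (fun he => hij (congrArg Fin.val he))).mp (h i j hd)
    · intro h i j hd
      obtain ⟨hi, hj, hij⟩ := LTree.desc_spec T i j hd
      rw [hT, List.mem_range] at hi hj
      have := h ⟨i, hi⟩ ⟨j, hj⟩ hd
      exact (hconv σ ⟨i, hi⟩ ⟨j, hj⟩ (by simp [Fin.ext_iff]; omega)).mpr this
  refine ⟨?_, hfiber⟩
  -- surjectivity via the postorder word
  have hu : (T.post).Perm T.labels := T.post_perm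
  have hlen : (T.post).length = n := by rw [hu.length_eq, hT, List.length_range]
  have hnd : (T.post).Nodup := hu.nodup_iff.mpr (hT ▸ List.nodup_range)
  have humem : ∀ x ∈ T.post, x < n := by
    intro x hx
    have := hu.subset hx
    rw [hT, List.mem_range] at this
    exact this
  have hget : ∀ i : Fin n, (i : ℕ) < (T.post).length := fun i => by
    rw [hlen]; exact i.isLt
  let f : Fin n → Fin n := fun i =>
    ⟨(T.post)[(i : ℕ)]'(hget i), humem _ (List.getElem_mem _)⟩
  have hinj : Function.Injective f := by
    intro i j hij
    have h1 : (T.post).get ⟨(i : ℕ), hget i⟩ = (T.post).get ⟨(j : ℕ), hget j⟩ :=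
      congrArg Fin.val hij
    have h2 := List.nodup_iff_injective_get.mp hnd h1
    have h3 : (i : ℕ) = (j : ℕ) := by simpa using h2
    exact Fin.ext h3
  have hbij : Function.Bijective f := Finite.injective_iff_bijective.mp hinj
  refine ⟨Equiv.ofBijective f hbij, ?_⟩
  have hword : word (Equiv.ofBijective f hbij) = T.post := by
    apply List.ext_getElem
    · rw [hwlen, hlen]
    · intro k h1 h2
      rw [hwlen] at h1
      simp only [word, List.getElem_ofFn]
      show (f ⟨k, h1⟩ : ℕ) = _
      rfl
  rw [bt, hword]
  exact T.ofWord_post hsorted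
end

section
/- The number of common vertices of the permutahedron Perm_n and Loday's associahedron Asso_n equals 2^{n-1}: these are exactly the permutations σ such that for every i ∈ [n], either all values before i in σ are larger than i, or all values after i in σ are larger than i. -/
/-!
A permutation has the property iff, read as a word, it decreases down to its minimal value and
increases afterwards: every value to the left of the minimum is then a left-to-right minimum and
every value to its right a right-to-left minimum. Such a word is determined by the set of values
placed to the left of the minimum, which may be any subset of the remaining `n - 1` values.
-/

open Equiv Function

namespace Tuple

variable {α : Type*} [LinearOrder α] {n : ℕ} {f : Fin n → α} {σ : Perm (Fin n)}

theorem eq_sort_iff_strictMono (hf : Injective f) : σ = sort f ↔ StrictMono (f ∘ σ) := by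
  refine ⟨?_, fun h => eq_sort_iff.2 ⟨h.monotone, fun i j hij he => absurd he (h hij).ne⟩⟩
  rintro rfl
  exact (monotone_sort f).strictMono_of_injective (hf.comp (sort f).injective)

end Tuple

theorem StrictMono.perm_inv_lt_perm_inv_iff {α : Type*} [Preorder α] {n : ℕ} {f : Fin n → α}
    {σ : Perm (Fin n)} (h : StrictMono (f ∘ σ)) {i j : Fin n} : σ⁻¹ i < σ⁻¹ j ↔ f i < f j := by
  simpa using (h.lt_iff_lt (a := σ⁻¹ i) (b := σ⁻¹ j)).symm

theorem Equiv.Perm.strictMono_comp_iff {α : Type*} [Preorder α] {n : ℕ} {f : Fin n → α}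
    {σ : Perm (Fin n)} : StrictMono (f ∘ σ) ↔ ∀ i j, σ⁻¹ i < σ⁻¹ j → f i < f j :=
  ⟨fun h _ _ => h.perm_inv_lt_perm_inv_iff.1,
    fun h a b hab => by simpa using h (σ a) (σ b) (by simpa)⟩

namespace CommonVertices

variable {n : ℕ}

/-- Sorting by this key lists the values marked `true` in decreasing order, then the others in
increasing order. -/
def signedKey (b : Fin n → Bool) (i : Fin n) : ℤ := if b i then -i else i

theorem signedKey_injective (b : Fin n → Bool) : Injective (signedKey b) := by
  intro i j h
  unfold signedKey at h
  split_ifs at h <;> omega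

theorem lt_of_signedKey_lt {b : Fin n → Bool} {i j : Fin n} (hi : b i = false)
    (h : signedKey b i < signedKey b j) : i < j := by
  simp only [signedKey, hi, Bool.false_eq_true, if_false] at h
  split_ifs at h <;> omega

theorem lt_of_signedKey_gt {b : Fin n → Bool} {i j : Fin n} (hi : b i = true)
    (h : signedKey b j < signedKey b i) : i < j := by
  simp only [signedKey, hi, if_true] at h
  split_ifs at h <;> omega

theorem strictMono_signedKey_comp_sort (b : Fin n → Bool) :
    StrictMono (signedKey b ∘ Tuple.sort (signedKey b)) :=
  (Tuple.eq_sort_iff_strictMono (signedKey_injective b)).1 rfl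

def IsLeftOrRightMin (σ : Perm (Fin n)) (i : Fin n) : Prop :=
  (∀ j, σ⁻¹ j < σ⁻¹ i → i < j) ∨ (∀ j, σ⁻¹ i < σ⁻¹ j → i < j)

theorem isLeftOrRightMin_of_strictMono {σ : Perm (Fin n)} {b : Fin n → Bool}
    (h : StrictMono (signedKey b ∘ σ)) (i : Fin n) : IsLeftOrRightMin σ i := by
  cases hb : b i
  · exact .inr fun j hj => lt_of_signedKey_lt hb (h.perm_inv_lt_perm_inv_iff.1 hj)
  · exact .inl fun j hj => lt_of_signedKey_gt hb (h.perm_inv_lt_perm_inv_iff.1 hj)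

section

variable {σ : Perm (Fin (n + 1))} {i : Fin (n + 1)}

theorem IsLeftOrRightMin.left_of_lt_zero (h : IsLeftOrRightMin σ i) (hi : σ⁻¹ i < σ⁻¹ 0)
    (j : Fin (n + 1)) (hj : σ⁻¹ j < σ⁻¹ i) : i < j :=
  h.resolve_right (fun hr => Fin.not_lt_zero i (hr 0 hi)) j hj

theorem IsLeftOrRightMin.right_of_zero_lt (h : IsLeftOrRightMin σ i) (hi : σ⁻¹ 0 < σ⁻¹ i)
    (j : Fin (n + 1)) (hj : σ⁻¹ i < σ⁻¹ j) : i < j :=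
  h.resolve_left (fun hl => Fin.not_lt_zero i (hl 0 hi)) j hj

def precedesZero (σ : Perm (Fin (n + 1))) (i : Fin (n + 1)) : Bool := decide (σ⁻¹ i < σ⁻¹ 0)

theorem strictMono_signedKey_precedesZero (hσ : ∀ i, IsLeftOrRightMin σ i) :
    StrictMono (signedKey (precedesZero σ) ∘ σ) := by
  refine Perm.strictMono_comp_iff.2 fun i j hab => ?_
  have ne_zero {k : Fin (n + 1)} (hk : σ⁻¹ k ≠ σ⁻¹ 0) : (k : ℕ) ≠ 0 :=
    Fin.val_ne_zero_iff.2 fun h => hk (h ▸ rfl)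
  simp only [signedKey, precedesZero]
  by_cases hi : σ⁻¹ i < σ⁻¹ 0 <;> by_cases hj : σ⁻¹ j < σ⁻¹ 0 <;>
    simp only [hi, hj, decide_true, decide_false, if_true, if_false, Bool.false_eq_true]
  · have := (hσ j).left_of_lt_zero hj i hab
    omega
  · have := ne_zero hi.ne
    omega
  · exact absurd (hab.trans hj) hi
  · have := ne_zero ((not_lt.1 hi).trans_lt hab).ne'
    rcases (not_lt.1 hi).lt_or_eq with hi | hi
    · have := (hσ i).right_of_zero_lt hi j hab
      omega
    · obtain rfl := σ⁻¹.injective hi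
      simpa using Nat.pos_of_ne_zero this

theorem precedesZero_sort_signedKey_succ (b : Fin n → Bool) (k : Fin n) :
    precedesZero (Tuple.sort (signedKey (Fin.cons false b))) k.succ = b k := by
  simp only [precedesZero, (strictMono_signedKey_comp_sort _).perm_inv_lt_perm_inv_iff, signedKey,
    Fin.cons_succ, Fin.cons_zero, Bool.false_eq_true, if_false, Fin.val_zero, Nat.cast_zero,
    Fin.val_succ]
  cases b k <;> simp only [if_true, if_false, Bool.false_eq_true, decide_eq_true_eq,
    decide_eq_false_iff_not] <;> omega

theorem cons_precedesZero_succ (σ : Perm (Fin (n + 1))) :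
    Fin.cons false (fun k => precedesZero σ k.succ) = precedesZero σ := by
  ext k
  cases k using Fin.cases <;> simp [precedesZero]

end

variable (n) in
noncomputable def leftOrRightMinEquiv :
    {σ : Perm (Fin (n + 1)) // ∀ i, IsLeftOrRightMin σ i} ≃ (Fin n → Bool) where
  toFun σ k := precedesZero σ.1 k.succ
  invFun b := ⟨Tuple.sort (signedKey (Fin.cons false b)),
    isLeftOrRightMin_of_strictMono (strictMono_signedKey_comp_sort _)⟩
  left_inv σ := Subtype.ext <| by
    dsimp only
    rw [cons_precedesZero_succ, eq_comm, Tuple.eq_sort_iff_strictMono (signedKey_injective _)]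
    exact strictMono_signedKey_precedesZero σ.2
  right_inv b := funext (precedesZero_sort_signedKey_succ b)

end CommonVertices

theorem card_common_vertices_perm_asso_general (n : ℕ) :
    Nat.card {σ : Perm (Fin n) //
      ∀ i : Fin n, (∀ j : Fin n, σ⁻¹ j < σ⁻¹ i → i < j) ∨
                   (∀ j : Fin n, σ⁻¹ i < σ⁻¹ j → i < j)} = 2 ^ (n - 1) := by
  cases n with
  | zero => simp
  | succ n => exact (Nat.card_congr (CommonVertices.leftOrRightMinEquiv n)).trans (by simp)

/-- The number of permutations `σ ∈ S_n` such that for every value `i`, either all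
values appearing before `i` in the one-line notation of `σ` are larger than `i`, or
all values appearing after `i` are larger than `i`, equals `2^(n-1)`.  These
permutations correspond to the common vertices of the permutahedron and of Loday's
associahedron. -/
theorem card_common_vertices_perm_asso (n : ℕ) (hn : 1 ≤ n) :
    Nat.card {σ : Perm (Fin n) //
      ∀ i : Fin n, (∀ j : Fin n, σ⁻¹ j < σ⁻¹ i → i < j) ∨
                   (∀ j : Fin n, σ⁻¹ i < σ⁻¹ j → i < j)} = 2 ^ (n - 1) :=
  card_common_vertices_perm_asso_general n
end

section
/- Loday's associahedron point map is injective: if two binary trees T, T' with n internal nodes satisfy ℓ(T,i)·r(T,i) = ℓ(T',i)·r(T',i) for all i ∈ [n], then T = T'. -/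
namespace BinTree

lemma leaves_eq_size (U : BinTree) : U.leaves = U.size + 1 := by
  induction U with
  | leaf => rfl
  | node l r hl hr => simp only [leaves, size, hl, hr]; ring

lemma length_lodayList (U : BinTree) : U.lodayList.length = U.size := by
  induction U with
  | leaf => rfl
  | node l r hl hr => simp only [lodayList, size, List.length_append, List.length_cons, hl, hr]; ring

lemma entry_bound (U : BinTree) (j : ℕ) (p : ℕ × ℕ) (hp : U.lodayList[j]? = some p) :
    p.1 ≤ j + 1 ∧ p.2 + j ≤ U.size := by
  induction U generalizing j with
  | leaf => simp [lodayList] at hp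
  | node l r hl hr =>
    rw [lodayList] at hp
    rcases lt_trichotomy j l.size with hj | hj | hj
    · rw [List.getElem?_append_left (by rw [length_lodayList]; exact hj)] at hp
      obtain ⟨h1, h2⟩ := hl j hp
      refine ⟨h1, ?_⟩
      simp only [size]; omega
    · rw [List.getElem?_append_right (by rw [length_lodayList]; omega),
        length_lodayList, hj, Nat.sub_self] at hp
      simp only [List.getElem?_cons_zero, Option.some_inj] at hp
      subst hp
      constructor
      · simp [leaves_eq_size, hj]
      · simp only [leaves_eq_size, size]; omega
    · rw [List.getElem?_append_right (by rw [length_lodayList]; omega),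
        length_lodayList] at hp
      obtain ⟨k, hk⟩ : ∃ k, j - l.size = k + 1 := ⟨j - l.size - 1, by omega⟩
      rw [hk, List.getElem?_cons_succ] at hp
      obtain ⟨h1, h2⟩ := hr k hp
      refine ⟨by omega, ?_⟩
      simp only [size]; omega

lemma not_size_lt (n : ℕ) (l r l' r' : BinTree)
    (hT : (node l r).size = n) (hT' : (node l' r').size = n)
    (h : (node l r).lodayList.map (fun p => p.1 * p.2) =
         (node l' r').lodayList.map (fun p => p.1 * p.2)) :
    ¬ l.size < l'.size := by
  intro hlt
  set j := l.size with hjdef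
  -- LHS element at index j
  have hlen : (l.lodayList.map (fun p : ℕ × ℕ => p.1 * p.2)).length = j := by
    simp [length_lodayList, hjdef]
  have hL : ((node l r).lodayList.map (fun p : ℕ × ℕ => p.1 * p.2))[j]? =
      some (l.leaves * r.leaves) := by
    rw [lodayList, List.map_append, List.map_cons,
      List.getElem?_append_right (by rw [hlen]), hlen, Nat.sub_self,
      List.getElem?_cons_zero]
  -- RHS element at index j
  have hj' : j < l'.lodayList.length := by rw [length_lodayList]; exact hlt
  obtain ⟨p, hp⟩ : ∃ p, l'.lodayList[j]? = some p :=
    ⟨l'.lodayList[j], List.getElem?_eq_getElem hj'⟩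
  have hR : ((node l' r').lodayList.map (fun p : ℕ × ℕ => p.1 * p.2))[j]? =
      some (p.1 * p.2) := by
    rw [lodayList, List.map_append,
      List.getElem?_append_left (by simpa [length_lodayList] using hlt),
      List.getElem?_map, hp]
    rfl
  rw [h, hR, Option.some_inj] at hL
  obtain ⟨h1, h2⟩ := entry_bound l' j p hp
  have hsz : l'.size + r'.size + 1 = n := hT'
  have hsz2 : l.size + r.size + 1 = n := hT
  have e1 : l.leaves = j + 1 := by rw [leaves_eq_size]
  have e2 : r.leaves = n - j := by rw [leaves_eq_size]; omega
  have hb : p.2 < n - j := by omega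
  have : p.1 * p.2 < (j + 1) * (n - j) :=
    lt_of_le_of_lt (Nat.mul_le_mul_right _ h1)
      ((Nat.mul_lt_mul_left (Nat.succ_pos j)).mpr hb)
  rw [e1, e2] at hL
  omega

end BinTree

/-- Loday's point map is injective: two binary trees with `n` internal nodes having
the same coordinate vector `(ℓ(T,i)·r(T,i))_{i ∈ [n]}` are equal. -/
theorem loday_point_injective (n : ℕ) (T T' : BinTree)
    (hT : T.size = n) (hT' : T'.size = n)
    (h : T.lodayList.map (fun p => p.1 * p.2) =
         T'.lodayList.map (fun p => p.1 * p.2)) :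
    T = T' := by
  induction T generalizing T' n with
  | leaf =>
    cases T' with
    | leaf => rfl
    | node l' r' => simp [BinTree.size] at hT hT'; omega
  | node l r ihl ihr =>
    cases T' with
    | leaf => simp [BinTree.size] at hT hT'; omega
    | node l' r' =>
      have h1 := BinTree.not_size_lt n l r l' r' hT hT' h
      have h2 := BinTree.not_size_lt n l' r' l r hT' hT h.symm
      have hsl : l.size = l'.size := by omega
      have hsr : r.size = r'.size := by
        simp only [BinTree.size] at hT hT'; omega
      rw [BinTree.lodayList, BinTree.lodayList, List.map_append, List.map_append] at h
      have hlen : (l.lodayList.map (fun p : ℕ × ℕ => p.1 * p.2)).length =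
          (l'.lodayList.map (fun p : ℕ × ℕ => p.1 * p.2)).length := by
        simp [BinTree.length_lodayList, hsl]
      obtain ⟨hA, hB⟩ := List.append_inj h hlen
      simp only [List.map_cons, List.cons.injEq] at hB
      have := ihl l.size l' rfl hsl.symm hA
      have := ihr r.size r' rfl hsr.symm hB.2
      subst this; subst ‹l = l'›; rfl
end

section
/- For every binary tree T with n internal nodes and every interval [i,j] ⊆ [n], the Loday coordinates satisfy Σ_{i ≤ ℓ ≤ j} ℓ(T,ℓ)·r(T,ℓ) ≥ C(j−i+2, 2), with equality for some tree for each interval. -/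
namespace BinTree

/-- The Loday coordinate `ℓ(T,k) · r(T,k)` of the `k`-th internal node of `T`
in infix order (`0`-indexed). -/
def lodayCoord (T : BinTree) (k : ℕ) : ℕ :=
  ((T.lodayList.getD k (0, 0)).1) * ((T.lodayList.getD k (0, 0)).2)

end BinTree

namespace BinTreeAux

open BinTree

lemma leaves_eq (T : BinTree) : T.leaves = T.size + 1 := by
  induction T with
  | leaf => rfl
  | node l r ihl ihr => simp only [leaves, size, ihl, ihr]; ring

lemma lodayList_length (T : BinTree) : T.lodayList.length = T.size := by
  induction T with
  | leaf => rfl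
  | node l r ihl ihr => simp [lodayList, size, ihl, ihr]; ring

lemma coord_node_left (L R : BinTree) (l : ℕ) (h : l < L.size) :
    (BinTree.node L R).lodayCoord l = L.lodayCoord l := by
  unfold BinTree.lodayCoord
  rw [show (BinTree.node L R).lodayList = L.lodayList ++ (L.leaves, R.leaves) :: R.lodayList from rfl,
    List.getD_append _ _ _ _ (by rw [lodayList_length]; exact h)]

lemma coord_node_mid (L R : BinTree) :
    (BinTree.node L R).lodayCoord L.size = L.leaves * R.leaves := by
  unfold BinTree.lodayCoord
  rw [show (BinTree.node L R).lodayList = L.lodayList ++ (L.leaves, R.leaves) :: R.lodayList from rfl,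
    List.getD_append_right _ _ _ _ (by rw [lodayList_length])]
  simp [lodayList_length]

lemma coord_node_right (L R : BinTree) (l : ℕ) (h : L.size < l) :
    (BinTree.node L R).lodayCoord l = R.lodayCoord (l - L.size - 1) := by
  unfold BinTree.lodayCoord
  rw [show (BinTree.node L R).lodayList = L.lodayList ++ (L.leaves, R.leaves) :: R.lodayList from rfl,
    List.getD_append_right _ _ _ _ (by rw [lodayList_length]; omega)]
  rw [lodayList_length]
  have : l - L.size = (l - L.size - 1) + 1 := by omega
  rw [this]
  simp

lemma choose_step (m : ℕ) : (m + 1).choose 2 = m.choose 2 + m := by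
  simp [Nat.choose_succ_succ, Nat.choose_one_right]; omega

lemma choose_add (p q : ℕ) :
    (p + 1).choose 2 + (p + 1) * (q + 1) + (q + 1).choose 2 = (p + q + 2).choose 2 := by
  induction q with
  | zero =>
    have h1 := choose_step (p + 1)
    have h2 : (p + 1) * (0 + 1) = p + 1 := by ring
    have h3 : ((0:ℕ) + 1).choose 2 = 0 := rfl
    have h4 : p + 0 + 2 = p + 1 + 1 := by omega
    rw [h4]; omega
  | succ q ih =>
    have h1 := choose_step (q + 1)
    have h2 := choose_step (p + q + 2)
    have h3 : (p + 1) * (q + 1 + 1) = (p + 1) * (q + 1) + (p + 1) := by ring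
    have h4 : p + (q + 1) + 2 = p + q + 2 + 1 := by omega
    rw [h4]; omega

lemma gauss (m : ℕ) : ∑ k ∈ Finset.range m, (k + 1) = (m + 1).choose 2 := by
  induction m with
  | zero => simp
  | succ m ih =>
    rw [Finset.sum_range_succ, ih]
    have := choose_step (m + 1)
    omega

lemma main_ineq (T : BinTree) : ∀ i j : ℕ, i ≤ j → j < T.size →
    (j - i + 2).choose 2 ≤ ∑ l ∈ Finset.Icc i j, T.lodayCoord l := by
  induction T with
  | leaf => intro i j _ h; simp [size] at h
  | node L R ihL ihR =>
    intro i j hij hj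
    have hsize : (BinTree.node L R).size = L.size + R.size + 1 := rfl
    rw [hsize] at hj
    set a := L.size with ha
    rw [show (Finset.Icc i j) = Finset.Ico i (j+1) from (Finset.Ico_add_one_right_eq_Icc i j).symm]
    rcases lt_or_ge j a with hcase | hcase
    · -- entirely in left subtree
      have : ∑ l ∈ Finset.Ico i (j+1), (BinTree.node L R).lodayCoord l
          = ∑ l ∈ Finset.Ico i (j+1), L.lodayCoord l := by
        apply Finset.sum_congr rfl
        intro l hl
        simp only [Finset.mem_Ico] at hl
        exact coord_node_left L R l (by omega)
      rw [this, Finset.Ico_add_one_right_eq_Icc]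
      exact ihL i j hij hcase
    rcases lt_or_ge a i with hcase2 | hcase2
    · -- entirely in right subtree
      have hsz : j - a - 1 < R.size := by omega
      have hrw : ∑ l ∈ Finset.Ico i (j+1), (BinTree.node L R).lodayCoord l
          = ∑ l ∈ Finset.Ico i (j+1), R.lodayCoord (l - a - 1) := by
        apply Finset.sum_congr rfl
        intro l hl
        simp only [Finset.mem_Ico] at hl
        exact coord_node_right L R l (by omega)
      rw [hrw, Finset.sum_Ico_eq_sum_range]
      have hre : ∑ l ∈ Finset.Icc (i - a - 1) (j - a - 1), R.lodayCoord l
          = ∑ k ∈ Finset.range (j + 1 - i), R.lodayCoord (i + k - a - 1) := by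
        rw [← Finset.Ico_add_one_right_eq_Icc, Finset.sum_Ico_eq_sum_range]
        rw [show j - a - 1 + 1 - (i - a - 1) = j + 1 - i by omega]
        apply Finset.sum_congr rfl
        intro k _
        congr 1
        omega
      have hkey := ihR (i - a - 1) (j - a - 1) (by omega) hsz
      rw [hre, show j - a - 1 - (i - a - 1) = j - i by omega] at hkey
      exact hkey
    · -- interval contains the root, i ≤ a ≤ j
      set p := a - i with hp
      set q := j - a with hq
      have hsplit : ∑ l ∈ Finset.Ico i (j+1), (BinTree.node L R).lodayCoord l
          = ∑ l ∈ Finset.Ico i a, (BinTree.node L R).lodayCoord l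
            + ∑ l ∈ Finset.Ico a (j+1), (BinTree.node L R).lodayCoord l := by
        rw [Finset.sum_Ico_consecutive _ hcase2 (by omega)]
      rw [hsplit, Finset.sum_eq_sum_Ico_succ_bot (show a < j + 1 by omega) ((BinTree.node L R).lodayCoord)]
      have hL : (p + 1).choose 2 ≤ ∑ l ∈ Finset.Ico i a, (BinTree.node L R).lodayCoord l := by
        rcases Nat.eq_or_lt_of_le hcase2 with h0 | h0
        · have hp0 : p + 1 = 1 := by omega
          rw [hp0, ← h0, Finset.Ico_self]
          simp [Nat.choose]
        · have hrw : ∑ l ∈ Finset.Ico i a, (BinTree.node L R).lodayCoord l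
              = ∑ l ∈ Finset.Ico i a, L.lodayCoord l := by
            apply Finset.sum_congr rfl
            intro l hl
            simp only [Finset.mem_Ico] at hl
            exact coord_node_left L R l hl.2
          rw [hrw, show a = (a-1)+1 by omega, Finset.Ico_add_one_right_eq_Icc]
          have hkey := ihL i (a-1) (by omega) (by omega)
          rwa [show a - 1 - i + 2 = p + 1 by omega] at hkey
      have hM : (p + 1) * (q + 1) ≤ (BinTree.node L R).lodayCoord a := by
        rw [coord_node_mid, leaves_eq, leaves_eq]
        have hb : q ≤ R.size := by omega
        exact Nat.mul_le_mul (by omega) (by omega)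
      have hR : (q + 1).choose 2 ≤ ∑ l ∈ Finset.Ico (a+1) (j+1), (BinTree.node L R).lodayCoord l := by
        rcases Nat.eq_or_lt_of_le hcase with h0 | h0
        · have hq0 : q + 1 = 1 := by omega
          rw [hq0, h0, Finset.Ico_self]
          simp [Nat.choose]
        · have hrw : ∑ l ∈ Finset.Ico (a+1) (j+1), (BinTree.node L R).lodayCoord l
              = ∑ l ∈ Finset.Ico (a+1) (j+1), R.lodayCoord (l - a - 1) := by
            apply Finset.sum_congr rfl
            intro l hl
            simp only [Finset.mem_Ico] at hl
            exact coord_node_right L R l (by omega)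
          have hsz : j - a - 1 < R.size := by omega
          have hkey := ihR 0 (j - a - 1) (by omega) hsz
          rw [← Finset.Ico_add_one_right_eq_Icc, Finset.sum_Ico_eq_sum_range] at hkey
          rw [hrw, Finset.sum_Ico_eq_sum_range]
          rw [show j - a - 1 - 0 + 2 = q + 1 by omega,
            show j - a - 1 + 1 - 0 = j + 1 - (a + 1) by omega] at hkey
          calc (q+1).choose 2 ≤ ∑ k ∈ Finset.range (j+1-(a+1)), R.lodayCoord (0 + k) := hkey
            _ = ∑ k ∈ Finset.range (j+1-(a+1)), R.lodayCoord (a + 1 + k - a - 1) := by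
                apply Finset.sum_congr rfl; intro k _; congr 1; omega
      have hfin : (j - i + 2).choose 2 = (p + q + 2).choose 2 := by congr 1; omega
      rw [hfin, ← choose_add p q]
      omega

/-- left comb -/
def leftComb : ℕ → BinTree
  | 0 => BinTree.leaf
  | n+1 => BinTree.node (leftComb n) BinTree.leaf

lemma leftComb_size (m : ℕ) : (leftComb m).size = m := by
  induction m with
  | zero => rfl
  | succ m ih => simp [leftComb, size, ih]

lemma leftComb_coord (m l : ℕ) (h : l < m) : (leftComb m).lodayCoord l = l + 1 := by
  induction m with
  | zero => omega
  | succ m ih =>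
    rcases lt_or_ge l m with h1 | h1
    · rw [show leftComb (m+1) = BinTree.node (leftComb m) BinTree.leaf from rfl,
        coord_node_left _ _ _ (by rw [leftComb_size]; exact h1)]
      exact ih h1
    · have hl : l = m := by omega
      subst hl
      rw [show leftComb (l+1) = BinTree.node (leftComb l) BinTree.leaf from rfl]
      have := coord_node_mid (leftComb l) BinTree.leaf
      rw [leftComb_size] at this
      rw [this, leaves_eq, leftComb_size]
      simp [leaves]

/-- extend on the right: adds nodes after all existing ones -/
def extendR : BinTree → ℕ → BinTree
  | T, 0 => T
  | T, k+1 => BinTree.node (extendR T k) BinTree.leaf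

lemma extendR_size (T : BinTree) (k : ℕ) : (extendR T k).size = T.size + k := by
  induction k with
  | zero => rfl
  | succ k ih => simp only [extendR, size, ih]; omega

lemma extendR_coord (T : BinTree) (k l : ℕ) (h : l < T.size) :
    (extendR T k).lodayCoord l = T.lodayCoord l := by
  induction k with
  | zero => rfl
  | succ k ih =>
    rw [show extendR T (k+1) = BinTree.node (extendR T k) BinTree.leaf from rfl,
      coord_node_left _ _ _ (by rw [extendR_size]; omega)]
    exact ih

/-- extend on the left: shifts positions by k -/
def extendL : ℕ → BinTree → BinTree
  | 0, T => T
  | k+1, T => BinTree.node BinTree.leaf (extendL k T)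

lemma extendL_size (k : ℕ) (T : BinTree) : (extendL k T).size = k + T.size := by
  induction k with
  | zero => simp [extendL]
  | succ k ih => simp only [extendL, size, ih]; omega

lemma extendL_coord (k : ℕ) (T : BinTree) (l : ℕ) :
    (extendL k T).lodayCoord (k + l) = T.lodayCoord l := by
  induction k with
  | zero => simp [extendL]
  | succ k ih =>
    rw [show extendL (k+1) T = BinTree.node BinTree.leaf (extendL k T) from rfl]
    have h0 : (BinTree.leaf).size = 0 := rfl
    have := coord_node_right BinTree.leaf (extendL k T) (k + 1 + l) (by rw [h0]; omega)
    rw [h0] at this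
    rw [show k + 1 + l - 0 - 1 = k + l by omega] at this
    rw [this]
    exact ih

end BinTreeAux

/-- Facet description of Loday's associahedron: for every binary tree `T` with `n`
internal nodes (labeled `0, …, n-1` in infix order) and every interval
`{i, …, j} ⊆ {0, …, n-1}`, we have `∑_{i ≤ l ≤ j} ℓ(T,l)·r(T,l) ≥ C(j-i+2, 2)`,
and for each interval, equality is attained by some tree. -/
theorem loday_facet_inequalities (n : ℕ) :
    (∀ T : BinTree, T.size = n → ∀ i j : ℕ, i ≤ j → j < n →
      (j - i + 2).choose 2 ≤ ∑ l ∈ Finset.Icc i j, T.lodayCoord l) ∧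
    (∀ i j : ℕ, i ≤ j → j < n →
      ∃ T : BinTree, T.size = n ∧
        (∑ l ∈ Finset.Icc i j, T.lodayCoord l) = (j - i + 2).choose 2) := by
  constructor
  · intro T hT i j hij hj
    exact BinTreeAux.main_ineq T i j hij (hT ▸ hj)
  · intro i j hij hj
    set m := j - i + 1 with hm
    refine ⟨BinTreeAux.extendL i (BinTreeAux.extendR (BinTreeAux.leftComb m) (n - 1 - j)), ?_, ?_⟩
    · rw [BinTreeAux.extendL_size, BinTreeAux.extendR_size, BinTreeAux.leftComb_size]
      omega
    · rw [← Finset.Ico_add_one_right_eq_Icc, Finset.sum_Ico_eq_sum_range]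
      have hterm : ∀ k ∈ Finset.range (j + 1 - i),
          (BinTreeAux.extendL i (BinTreeAux.extendR (BinTreeAux.leftComb m) (n - 1 - j))).lodayCoord (i + k)
            = k + 1 := by
        intro k hk
        simp only [Finset.mem_range] at hk
        rw [BinTreeAux.extendL_coord, BinTreeAux.extendR_coord _ _ _
          (by rw [BinTreeAux.leftComb_size]; omega), BinTreeAux.leftComb_coord _ _ (by omega)]
      rw [Finset.sum_congr rfl hterm, BinTreeAux.gauss]
      congr 1
      omega
end

section
/- For a tube decomposition on a simple graph G: any two tubes in a tubing are either nested or disjoint and non-adjacent, and consequently any tubing of a connected graph G on m vertices has cardinality at most m. -/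
variable {V : Type*} [Fintype V] [DecidableEq V]

/-- A tube of a simple graph: a nonempty set of vertices inducing a connected subgraph. -/
def IsTube (G : SimpleGraph V) (t : Finset V) : Prop :=
  t.Nonempty ∧ (G.induce (↑t : Set V)).Connected

/-- Two tubes are compatible if they are nested, or disjoint with union not a tube
(i.e. disjoint and non-adjacent). -/
def TubesCompatible (G : SimpleGraph V) (t t' : Finset V) : Prop :=
  t ⊆ t' ∨ t' ⊆ t ∨ (t ∩ t' = ∅ ∧ ¬ IsTube G (t ∪ t'))

/-- A tubing of a connected graph: a set of pairwise compatible tubes containing the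
unique connected component, i.e. the full vertex set. -/
def IsTubing (G : SimpleGraph V) (𝒯 : Finset (Finset V)) : Prop :=
  (∀ t ∈ 𝒯, IsTube G t) ∧
  (∀ t ∈ 𝒯, ∀ t' ∈ 𝒯, TubesCompatible G t t') ∧
  Finset.univ ∈ 𝒯

/-- Any tubing of a connected graph on `m` vertices has at most `m` tubes. -/
theorem tubing_card_le (G : SimpleGraph V) (hG : G.Connected)
    (𝒯 : Finset (Finset V)) (h𝒯 : IsTubing G 𝒯) :
    𝒯.card ≤ Fintype.card V := by
  classical
  obtain ⟨htube, hcomp, -⟩ := h𝒯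
  -- Key: every tube in the tubing has a vertex in no proper subtube from the tubing.
  have key : ∀ t ∈ 𝒯, ∃ x, x ∈ t ∧ ∀ s ∈ 𝒯, s ⊂ t → x ∉ s := by
    intro t ht
    by_contra hcov
    push_neg at hcov
    obtain ⟨x₀, hx₀⟩ := (htube t ht).1
    -- the family of proper subtubes containing x₀
    set F : Finset (Finset V) := 𝒯.filter (fun s => s ⊂ t ∧ x₀ ∈ s) with hF
    have hFne : F.Nonempty := by
      obtain ⟨s, hs, hst, hxs⟩ := hcov x₀ hx₀
      exact ⟨s, by simp [hF, hs, hst, hxs]⟩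
    obtain ⟨s, hsF, hsmax⟩ := F.exists_max_image Finset.card hFne
    have hs𝒯 : s ∈ 𝒯 := (Finset.mem_filter.mp hsF).1
    have hst : s ⊂ t := (Finset.mem_filter.mp hsF).2.1
    have hxs : x₀ ∈ s := (Finset.mem_filter.mp hsF).2.2
    obtain ⟨y, hyt, hys⟩ := Finset.exists_of_ssubset hst
    -- walk in the induced graph on `t` from `x₀` to `y`
    have hconn := (htube t ht).2
    have hx₀t : (x₀ : V) ∈ (↑t : Set V) := hx₀
    have hreach : ((G.induce (↑t : Set V)).Reachable ⟨x₀, hx₀⟩ ⟨y, hyt⟩) :=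
      hconn.preconnected _ _
    obtain ⟨p⟩ := hreach
    obtain ⟨d, -, hdfst, hdsnd⟩ :=
      p.exists_boundary_dart {v : (↑t : Set V) | (v : V) ∈ s} hxs hys
    have hadj : G.Adj (d.fst : V) (d.snd : V) := d.adj
    have hsnd_t : (d.snd : V) ∈ t := d.snd.2
    obtain ⟨s', hs'𝒯, hs't, hsnd_s'⟩ := hcov (d.snd : V) hsnd_t
    rcases hcomp s hs𝒯 s' hs'𝒯 with h1 | h2 | ⟨hdisj, hnt⟩
    · -- s ⊆ s' contradicts maximality
      have hss' : s ⊂ s' := ⟨h1, fun h => hdsnd (h hsnd_s')⟩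
      have hs'F : s' ∈ F := by
        simp only [hF, Finset.mem_filter]
        exact ⟨hs'𝒯, hs't, h1 hxs⟩
      have := hsmax s' hs'F
      exact absurd (Finset.card_lt_card hss') (not_lt.mpr this)
    · exact hdsnd (h2 hsnd_s')
    · apply hnt
      refine ⟨⟨(d.fst : V), Finset.mem_union_left _ hdfst⟩, ?_⟩
      rw [Finset.coe_union]
      exact SimpleGraph.connected_induce_union (G := G) (htube s hs𝒯).2.preconnected (htube s' hs'𝒯).2.preconnected
        hdfst hsnd_s' hadj
  choose f hf1 hf2 using key
  -- `f` is injective on the tubing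
  have : Nonempty V := hG.nonempty
  obtain ⟨x₀⟩ := this
  rw [← Finset.card_univ]
  apply Finset.card_le_card_of_injOn (fun t => if h : t ∈ 𝒯 then f t h else x₀)
  · intro t ht; exact Finset.mem_univ _
  · intro t ht t' ht' hfe
    simp only [Finset.mem_coe] at ht ht'
    simp only [dif_pos ht, dif_pos ht'] at hfe
    by_contra hne
    rcases hcomp t ht t' ht' with h1 | h2 | ⟨hdisj, -⟩
    · have : t ⊂ t' := ⟨h1, fun h => hne (Finset.Subset.antisymm h1 h)⟩
      exact hf2 t' ht' t ht this (hfe ▸ hf1 t ht)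
    · have : t' ⊂ t := ⟨h2, fun h => hne (Finset.Subset.antisymm h h2)⟩
      exact hf2 t ht t' ht' this (hfe.symm ▸ hf1 t' ht')
    · have : f t ht ∈ t ∩ t' := Finset.mem_inter.mpr ⟨hf1 t ht, hfe ▸ hf1 t' ht'⟩
      rw [hdisj] at this
      exact absurd this (Finset.notMem_empty _)
end
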